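/- arXiv:1102.3045 — 4 statements merged into one kernel-verified Lean document; each statement's English description precedes it below -/
import Mathlib

section
/- Let A be a subset of (ℤ/2ℤ)^n. Then there exists a basis e₁,…,eₙ of (ℤ/2ℤ)^n (as an 𝔽₂-vector space) such that every element of A is a sum of an odd number of basis vectors, if and only if no sum of an odd number of (not necessarily distinct) elements of A equals 0. -/
/-!
Over `𝔽₂`, a vector is an odd sum of the vectors of a basis `e` exactly when the functional
taking the value `1` on every `e j` sends it to `1`, and every nonzero functional arises in this
way from some basis (conjugate the coordinate sum by a transvection). So both sides of the
equivalence say that `A` lies in an affine hyperplane `f = 1`: a functional that is `1` on `A`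
is `1` on every odd sum, and conversely, if no odd sum vanishes then `(0, 1)` is not in the span
of the `(a, 1)`, `a ∈ A`, and a functional separating it from that span is `1` on `A`.
-/

open Module

theorem map_list_sum_eq_length {M R F : Type*} [AddMonoid M] [Semiring R] [FunLike F M R]
    [AddMonoidHomClass F M R] (f : F) {l : List M} (h : ∀ x ∈ l, f x = 1) :
    f l.sum = l.length := by
  rw [map_list_sum, List.map_congr_left h, List.map_const', List.sum_replicate, nsmul_one]

namespace ZModTwo

variable {V ι : Type*} [AddCommGroup V] [Module (ZMod 2) V]

theorem eq_one_of_ne_zero {x : ZMod 2} (hx : x ≠ 0) : x = 1 := by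
  revert x; decide

theorem exists_list_sum_eq_of_mem_span {s : Set V} {x : V}
    (hx : x ∈ Submodule.span (ZMod 2) s) : ∃ l : List V, (∀ v ∈ l, v ∈ s) ∧ l.sum = x := by
  rw [← Submodule.restrictScalars_mem ℕ,
    Submodule.restrictScalars_span ℕ (ZMod 2) ZMod.natCast_zmod_surjective,
    ← Submodule.mem_toAddSubmonoid, Submodule.span_nat_eq_addSubmonoidClosure] at hx
  exact AddSubmonoid.exists_list_of_mem_closure hx

theorem _root_.Module.Basis.exists_list_sum_map_eq (e : Basis ι (ZMod 2) V) (x : V) :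
    ∃ l : List ι, (l.map e).sum = x := by
  classical
  refine ⟨(e.repr x).support.toList, ?_⟩
  conv_rhs => rw [← e.linearCombination_repr x]
  rw [Finset.sum_map_toList, Finsupp.linearCombination_apply, Finsupp.sum]
  refine Finset.sum_congr rfl fun j hj => ?_
  rw [eq_one_of_ne_zero (Finsupp.mem_support_iff.1 hj), one_smul]

theorem not_exists_odd_sum_eq_zero {A : Set V} {f : Dual (ZMod 2) V} (hf : ∀ a ∈ A, f a = 1) :
    ¬ ∃ l : List V, Odd l.length ∧ (∀ v ∈ l, v ∈ A) ∧ l.sum = 0 := by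
  rintro ⟨l, hodd, hlA, hsum⟩
  have := map_list_sum_eq_length f fun v hv => hf v (hlA v hv)
  rw [hsum, map_zero, eq_comm, ZMod.natCast_eq_zero_iff_even] at this
  exact (Nat.not_even_iff_odd.2 hodd) this

theorem exists_dual_forall_eq_one {A : Set V}
    (hA : ¬ ∃ l : List V, Odd l.length ∧ (∀ v ∈ l, v ∈ A) ∧ l.sum = 0) :
    ∃ f : Dual (ZMod 2) V, ∀ a ∈ A, f a = 1 := by
  set S := Submodule.span (ZMod 2) ((fun a => (a, (1 : ZMod 2))) '' A)
  have hS : ((0 : V), (1 : ZMod 2)) ∉ S := by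
    intro h
    obtain ⟨l, hlA, hsum⟩ := exists_list_sum_eq_of_mem_span h
    refine hA ⟨l.map Prod.fst, ?_, ?_, ?_⟩
    · have hsnd : ∀ v ∈ l, LinearMap.snd (ZMod 2) V (ZMod 2) v = 1 := fun v hv => by
        obtain ⟨a, -, rfl⟩ := hlA v hv
        rfl
      rw [List.length_map, ← ZMod.natCast_eq_one_iff_odd, ← map_list_sum_eq_length _ hsnd, hsum]
      rfl
    · intro v hv
      obtain ⟨w, hw, rfl⟩ := List.mem_map.1 hv
      obtain ⟨a, ha, rfl⟩ := hlA w hw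
      exact ha
    · exact (map_list_sum (LinearMap.fst (ZMod 2) V (ZMod 2)) l).symm.trans
        (congrArg Prod.fst hsum)
  obtain ⟨g, hg1, hgS⟩ := S.exists_dual_map_eq_bot_of_notMem hS inferInstance
  refine ⟨g ∘ₗ LinearMap.inl (ZMod 2) V (ZMod 2), fun a ha => ?_⟩
  have hga : g (a, 1) = 0 :=
    LinearMap.le_ker_iff_map.2 hgS (Submodule.subset_span ⟨a, ha, rfl⟩)
  have hsplit : ((a, 0) : V × ZMod 2) = (a, 1) + (0, 1) := Prod.ext (add_zero a).symm rfl
  rw [LinearMap.comp_apply, LinearMap.inl_apply, hsplit, map_add, hga, zero_add]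
  exact eq_one_of_ne_zero hg1

theorem exists_basis_forall_apply_eq_one (b : Basis ι (ZMod 2) V) {f : Dual (ZMod 2) V}
    (hf : f ≠ 0) : ∃ e : Basis ι (ZMod 2) V, ∀ j, f (e j) = 1 := by
  obtain ⟨j₀, hj₀⟩ : ∃ j₀, f (b j₀) = 1 := by
    by_contra! h
    exact hf (b.ext fun j => by_contra fun hj => h j (eq_one_of_ne_zero hj))
  -- `g = σ + f`, where `σ` sums the `b`-coordinates; the transvection `x ↦ x + g x • b j₀`
  -- turns `f` into `σ`.
  set g : Dual (ZMod 2) V := b.constr (ZMod 2) (fun _ => 1) + f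
  have hg : g (b j₀) = 0 := by
    simp only [g, LinearMap.add_apply, Basis.constr_basis, hj₀]
    rfl
  refine ⟨b.map (LinearEquiv.transvection hg), fun j => ?_⟩
  simp only [Basis.map_apply, LinearEquiv.transvection.apply, map_add, map_smul, g,
    LinearMap.add_apply, Basis.constr_basis, hj₀, smul_eq_mul, mul_one]
  generalize f (b j) = x
  revert x; decide

theorem exists_basis_iff_exists_dual (b : Basis ι (ZMod 2) V) (A : Set V) :
    (∃ e : Basis ι (ZMod 2) V, ∀ a ∈ A, ∃ l : List ι, Odd l.length ∧ a = (l.map e).sum) ↔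
      ∃ f : Dual (ZMod 2) V, ∀ a ∈ A, f a = 1 := by
  have apply_sum_map {e : Basis ι (ZMod 2) V} {f : Dual (ZMod 2) V} (he : ∀ j, f (e j) = 1)
      (l : List ι) : f (l.map e).sum = l.length := by
    rw [map_list_sum_eq_length f (by simpa using fun j _ => he j), List.length_map]
  constructor
  · rintro ⟨e, he⟩
    refine ⟨e.constr (ZMod 2) fun _ => 1, fun a ha => ?_⟩
    obtain ⟨l, hodd, rfl⟩ := he a ha
    rw [apply_sum_map (fun j => e.constr_basis _ _ j), ZMod.natCast_eq_one_iff_odd]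
    exact hodd
  · rintro ⟨f, hf⟩
    rcases A.eq_empty_or_nonempty with rfl | ⟨a₀, ha₀⟩
    · exact ⟨b, by simp⟩
    obtain ⟨e, he⟩ := exists_basis_forall_apply_eq_one b (f := f) fun h0 => by
      simpa [h0] using hf a₀ ha₀
    refine ⟨e, fun a ha => ?_⟩
    obtain ⟨l, rfl⟩ := e.exists_list_sum_map_eq a
    refine ⟨l, ?_, rfl⟩
    rw [← ZMod.natCast_eq_one_iff_odd, ← apply_sum_map he, hf _ ha]

end ZModTwo

/-- A subset `A` of `(ℤ/2ℤ)^n` admits a basis of `(ℤ/2ℤ)^n` in which every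
element of `A` is a sum of an odd number of basis vectors iff no sum of an odd number of
(not necessarily distinct) elements of `A` equals `0`. -/
theorem stmt0 (n : ℕ) (A : Set (Fin n → ZMod 2)) :
    (∃ e : Module.Basis (Fin n) (ZMod 2) (Fin n → ZMod 2),
      ∀ a ∈ A, ∃ l : List (Fin n), Odd l.length ∧ a = (l.map e).sum) ↔
    ¬ ∃ l : List (Fin n → ZMod 2), Odd l.length ∧ (∀ v ∈ l, v ∈ A) ∧ l.sum = 0 :=
  (ZModTwo.exists_basis_iff_exists_dual (Pi.basisFun _ _) A).trans
    ⟨fun ⟨_, hf⟩ => ZModTwo.not_exists_odd_sum_eq_zero hf, ZModTwo.exists_dual_forall_eq_one⟩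
end

section
/- Let G ⊆ (ℤ/2ℤ)^n. There exists a nonzero function n : (ℤ/2ℤ)^n → ℤ with n(ξ) = −n(ξ + g) for all ξ ∈ (ℤ/2ℤ)^n and g ∈ G, if and only if there exists a basis of (ℤ/2ℤ)^n over 𝔽₂ such that every element of G is a sum of an odd number of basis vectors. -/
/-!
A function antiperiodic under every `g ∈ G` is periodic under every difference `g - g'`, and
its periods form a subgroup, hence an `𝔽₂`-subspace. If `f ≠ 0` no `g ∈ G` is a period, so `G`
avoids the span of `G - G` and a linear form `φ` with `φ = 1` on `G` exists; conversely such a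
`φ` gives the nonzero antiperiodic function `ξ ↦ (-1) ^ φ ξ`. Finally, over `𝔽₂` the vectors
that are sums of an odd number of vectors of a basis `e` are those with `e.sumCoords = 1`, and
every nonzero form is `e.sumCoords` for a suitable basis `e`, obtained by a transvection.
-/

open Function Module Submodule Pointwise

namespace Function

def periods {V M : Type*} [AddGroup V] (f : V → M) : AddSubgroup V where
  carrier := {c | Periodic f c}
  zero_mem' := periodic_with_period_zero f
  add_mem' := Periodic.add_period
  neg_mem' := Periodic.neg

theorem Antiperiodic.eq_zero_of_periodic {V M : Type*} [Add V] [AddGroup M] [IsAddTorsionFree M]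
    {f : V → M} {c : V} (ha : Antiperiodic f c) (hp : Periodic f c) : f = 0 :=
  funext fun x => self_eq_neg.mp ((hp x).symm.trans (ha x))

end Function

theorem exists_dual_eq_one_of_forall_notMem_span_sub {K V : Type*} [Field K] [AddCommGroup V]
    [Module K V] {G : Set V} (hG : ∀ g ∈ G, g ∉ span K (G - G)) :
    ∃ φ : Dual K V, ∀ g ∈ G, φ g = 1 := by
  rcases G.eq_empty_or_nonempty with rfl | ⟨g₀, hg₀⟩
  · exact ⟨0, by simp⟩
  obtain ⟨φ, hφg₀, hφ⟩ := exists_le_ker_of_notMem (hG g₀ hg₀)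
  refine ⟨(φ g₀)⁻¹ • φ, fun g hg => ?_⟩
  have h : φ (g - g₀) = 0 := hφ (subset_span (Set.sub_mem_sub hg hg₀))
  rw [map_sub, sub_eq_zero] at h
  simp [h, hφg₀]

theorem ZMod.eq_one_of_ne_zero {x : ZMod 2} (hx : x ≠ 0) : x = 1 := by
  revert x
  decide

section ZModTwo

variable {V : Type*} [AddCommGroup V] [Module (ZMod 2) V]

theorem exists_dual_eq_one_of_antiperiodic {M : Type*} [AddCommGroup M] [IsAddTorsionFree M]
    {f : V → M} (hf : f ≠ 0) {G : Set V} (hG : ∀ g ∈ G, Antiperiodic f g) :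
    ∃ φ : Dual (ZMod 2) V, ∀ g ∈ G, φ g = 1 := by
  have hspan : span (ZMod 2) (G - G) ≤ AddSubgroup.toZModSubmodule 2 (periods f) :=
    span_le.mpr <| by
      rintro _ ⟨a, ha, b, hb, rfl⟩
      exact (hG a ha).sub (hG b hb)
  exact exists_dual_eq_one_of_forall_notMem_span_sub fun g hg hg' =>
    hf ((hG g hg).eq_zero_of_periodic (hspan hg'))

theorem exists_antiperiodic_iff_exists_dual_eq_one {G : Set V} :
    (∃ f : V → ℤ, f ≠ 0 ∧ ∀ g ∈ G, Antiperiodic f g) ↔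
      ∃ φ : Dual (ZMod 2) V, ∀ g ∈ G, φ g = 1 := by
  refine ⟨fun ⟨f, hf, hG⟩ => exists_dual_eq_one_of_antiperiodic hf hG, fun ⟨φ, hφ⟩ => ?_⟩
  refine ⟨fun ξ => (-1) ^ (φ ξ).val, fun h => by simpa using congrFun h 0, fun g hg ξ => ?_⟩
  have hsign : ∀ x : ZMod 2, (-1 : ℤ) ^ (x + 1).val = -(-1) ^ x.val := by decide
  simp only [map_add, hφ g hg, hsign]

end ZModTwo

namespace Module.Basis

theorem exists_sumCoords_eq {ι R M : Type*} [CommRing R] [AddCommGroup M] [Module R M]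
    (b : Basis ι R M) {φ : Dual R M} {i₀ : ι} (h : φ (b i₀) = 1) :
    ∃ e : Basis ι R M, e.sumCoords = φ := by
  have hψ : (b.sumCoords - φ) (b i₀) = 0 := by simp [h]
  set T := LinearEquiv.transvection hψ
  refine ⟨b.map T, (b.map T).ext fun i => ?_⟩
  rw [sumCoords_self_apply, map_apply, LinearEquiv.transvection.apply, map_add, map_smul, h,
    LinearMap.sub_apply, sumCoords_self_apply, smul_eq_mul, mul_one, add_sub_cancel]

variable {ι M : Type*} [AddCommGroup M] [Module (ZMod 2) M]

theorem exists_sumCoords_eq_of_ne_zero (b : Basis ι (ZMod 2) M) {φ : Dual (ZMod 2) M}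
    (hφ : φ ≠ 0) : ∃ e : Basis ι (ZMod 2) M, e.sumCoords = φ := by
  obtain ⟨i₀, hi₀⟩ : ∃ i, φ (b i) ≠ 0 := by
    by_contra! h
    exact hφ (b.ext fun i => by simpa using h i)
  exact b.exists_sumCoords_eq (ZMod.eq_one_of_ne_zero hi₀)

theorem exists_odd_sum_iff_sumCoords_eq_one (e : Basis ι (ZMod 2) M) (v : M) :
    (∃ l : List ι, Odd l.length ∧ v = (l.map e).sum) ↔ e.sumCoords v = 1 := by
  constructor
  · rintro ⟨l, hl, rfl⟩
    simpa [map_list_sum, List.map_map, Function.comp_def] using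
      ZMod.natCast_eq_one_iff_odd.mpr hl
  · intro hv
    set s := (e.repr v).support
    have hcoeff : ∀ i ∈ s, e.repr v i = 1 := fun i hi =>
      ZMod.eq_one_of_ne_zero (Finsupp.mem_support_iff.mp hi)
    have hsum : v = ∑ i ∈ s, e i := by
      conv_lhs => rw [← e.linearCombination_repr v]
      rw [Finsupp.linearCombination_apply, Finsupp.sum]
      exact Finset.sum_congr rfl fun i hi => by rw [hcoeff i hi, one_smul]
    have hcard : (s.card : ZMod 2) = 1 := by
      rw [← hv, coe_sumCoords]
      simp [Finsupp.sum, Finset.sum_congr rfl hcoeff, s]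
    exact ⟨s.toList, by simpa using ZMod.natCast_eq_one_iff_odd.mp hcard,
      by rw [hsum, Finset.sum_map_toList]⟩

theorem exists_dual_eq_one_iff_exists_sumCoords_eq_one (b : Basis ι (ZMod 2) M) {G : Set M} :
    (∃ φ : Dual (ZMod 2) M, ∀ g ∈ G, φ g = 1) ↔
      ∃ e : Basis ι (ZMod 2) M, ∀ g ∈ G, e.sumCoords g = 1 := by
  refine ⟨fun ⟨φ, hφ⟩ => ?_, fun ⟨e, he⟩ => ⟨e.sumCoords, he⟩⟩
  rcases G.eq_empty_or_nonempty with rfl | ⟨g₀, hg₀⟩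
  · exact ⟨b, by simp⟩
  obtain ⟨e, rfl⟩ := b.exists_sumCoords_eq_of_ne_zero (φ := φ) <| by
    rintro rfl
    simpa using hφ g₀ hg₀
  exact ⟨e, hφ⟩

end Module.Basis

/-- There is a nonzero function `f : (ℤ/2ℤ)^n → ℤ` with `f ξ = - f (ξ + g)` for
all `g ∈ G` iff there is a basis of `(ℤ/2ℤ)^n` such that every element of `G` is a sum of an
odd number of basis vectors. -/
theorem stmt6 (n : ℕ) (G : Set (Fin n → ZMod 2)) :
    (∃ f : (Fin n → ZMod 2) → ℤ, f ≠ 0 ∧ ∀ ξ, ∀ g ∈ G, f ξ = - f (ξ + g)) ↔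
    (∃ e : Module.Basis (Fin n) (ZMod 2) (Fin n → ZMod 2),
      ∀ g ∈ G, ∃ l : List (Fin n), Odd l.length ∧ g = (l.map e).sum) := by
  have hanti (f : (Fin n → ZMod 2) → ℤ) :
      (∀ ξ, ∀ g ∈ G, f ξ = -f (ξ + g)) ↔ ∀ g ∈ G, Antiperiodic f g :=
    ⟨fun h g hg ξ => Int.eq_neg_comm.mp (h ξ g hg),
      fun h ξ g hg => Int.eq_neg_comm.mp (h g hg ξ)⟩
  simp only [hanti, exists_antiperiodic_iff_exists_dual_eq_one,
    (Pi.basisFun (ZMod 2) (Fin n)).exists_dual_eq_one_iff_exists_sumCoords_eq_one,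
    Basis.exists_odd_sum_iff_sumCoords_eq_one]
end

section
/- Let G ⊆ (ℤ/2ℤ)^n. There exists a function n : (ℤ/2ℤ)^n → ℤ, not identically zero, with n(ξ) = −n(ξ + g) for all ξ and g ∈ G, if and only if there is a group homomorphism χ : (ℤ/2ℤ)^n → ℤ/2ℤ with χ(g) = 1 for all g ∈ G. -/
/-!
If `f` is antiperiodic with respect to every `g ∈ G`, it is periodic with respect to every
difference `g - g'`, hence with respect to the whole vector span of `G` over `𝔽₂`. A nonzero `f`
cannot be both periodic and antiperiodic with respect to the same vector, so `0` lies outside the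
affine span of `G`, and a linear functional equal to `1` on that affine span exists. Conversely,
`ξ ↦ (-1) ^ χ ξ` is a nonzero function that changes sign under translation by any `g` with
`χ g = 1`.
-/

open Function

namespace Function

variable {α β : Type*}

def periodAddSubgroup [AddGroup α] (f : α → β) : AddSubgroup α where
  carrier := {c | Periodic f c}
  zero_mem' := fun x => by rw [add_zero]
  add_mem' := Periodic.add_period
  neg_mem' := Periodic.neg

theorem periodic_of_mem_vectorSpan [AddCommGroup α] [Module (ZMod 2) α] [InvolutiveNeg β]
    {f : α → β} {s : Set α} (hs : ∀ g ∈ s, Antiperiodic f g) {v : α}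
    (hv : v ∈ vectorSpan (ZMod 2) s) : Periodic f v := by
  have hle : vectorSpan (ZMod 2) s ≤ AddSubgroup.toZModSubmodule 2 (periodAddSubgroup f) := by
    rw [vectorSpan_def, Submodule.span_le]
    rintro _ ⟨g, hg, g', hg', rfl⟩
    exact (hs g hg).sub (hs g' hg')
  exact hle hv

end Function

theorem zero_notMem_affineSpan_of_antiperiodic {V β : Type*} [AddCommGroup V]
    [Module (ZMod 2) V] [AddGroup β] [IsAddTorsionFree β] {f : V → β} (hf : f ≠ 0) {s : Set V}
    (hs : ∀ g ∈ s, Antiperiodic f g) : (0 : V) ∉ affineSpan (ZMod 2) s := by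
  intro h0
  obtain ⟨g, hg⟩ := (affineSpan_nonempty (k := ZMod 2)).mp ⟨0, h0⟩
  have hper : Periodic f (-g) := by
    refine periodic_of_mem_vectorSpan hs ?_
    rw [← direction_affineSpan, ← zero_sub]
    exact AffineSubspace.vsub_mem_direction h0 (mem_affineSpan _ hg)
  exact hf (funext fun x => self_eq_neg.mp ((hper x).symm.trans ((hs g hg).neg x)))

theorem exists_linearMap_eq_one_of_zero_notMem_affineSpan {K V : Type*} [Field K]
    [AddCommGroup V] [Module K V] {s : Set V} (h0 : (0 : V) ∉ affineSpan K s) :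
    ∃ χ : V →ₗ[K] K, ∀ g ∈ s, χ g = 1 := by
  rcases s.eq_empty_or_nonempty with rfl | ⟨g₀, hg₀⟩
  · exact ⟨0, by simp⟩
  have hg₀_notMem : g₀ ∉ vectorSpan K s := by
    rw [← neg_mem_iff, ← zero_sub, ← vsub_eq_sub, ← direction_affineSpan,
      AffineSubspace.vsub_right_mem_direction_iff_mem (mem_affineSpan K hg₀)]
    exact h0
  obtain ⟨φ, hφg₀, hφ⟩ := Submodule.exists_dual_map_eq_bot_of_notMem hg₀_notMem inferInstance
  refine ⟨(φ g₀)⁻¹ • φ, fun g hg => ?_⟩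
  have hdiff : φ (g - g₀) = 0 :=
    LinearMap.le_ker_iff_map.mpr hφ (vsub_mem_vectorSpan K hg hg₀)
  rw [map_sub, sub_eq_zero] at hdiff
  simp [hdiff, hφg₀]

theorem antiperiodic_uzpow_neg_one {V : Type*} [AddCommGroup V] (χ : V →+ ZMod 2) {g : V}
    (hg : χ g = 1) : Antiperiodic (fun ξ => (((-1 : ℤˣ) ^ χ ξ : ℤˣ) : ℤ)) g := fun ξ => by
  simp [map_add, uzpow_add, hg]

/-- There is a not identically zero function `f : (ℤ/2ℤ)^n → ℤ` with
`f ξ = - f (ξ + g)` for all `g ∈ G` iff there is a group homomorphism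
`χ : (ℤ/2ℤ)^n → ℤ/2ℤ` with `χ g = 1` for all `g ∈ G`. -/
theorem stmt7 (n : ℕ) (G : Set (Fin n → ZMod 2)) :
    (∃ f : (Fin n → ZMod 2) → ℤ, f ≠ 0 ∧ ∀ ξ, ∀ g ∈ G, f ξ = - f (ξ + g)) ↔
    (∃ χ : (Fin n → ZMod 2) →+ ZMod 2, ∀ g ∈ G, χ g = 1) := by
  constructor
  · rintro ⟨f, hf, hsign⟩
    have hanti : ∀ g ∈ G, Antiperiodic f g := fun g hg ξ =>
      (neg_eq_iff_eq_neg.mpr (hsign ξ g hg)).symm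
    obtain ⟨χ, hχ⟩ := exists_linearMap_eq_one_of_zero_notMem_affineSpan
      (zero_notMem_affineSpan_of_antiperiodic hf hanti)
    exact ⟨χ.toAddMonoidHom, hχ⟩
  · rintro ⟨χ, hχ⟩
    refine ⟨fun ξ => (((-1 : ℤˣ) ^ χ ξ : ℤˣ) : ℤ), fun h => ?_, fun ξ g hg => ?_⟩
    · simpa using congrFun h 0
    · exact neg_eq_iff_eq_neg.mp (antiperiodic_uzpow_neg_one χ (hχ g hg) ξ).symm
end

section
/- Let P be a finite poset. All maximal chains of P have odd length if and only if there exists a function r : P → ℤ/2ℤ such that r(a) = 1 for every minimal element a, r(b) = 0 for every maximal element b, and r(a) ≠ r(b) whenever a ⋖ b is a cover relation. -/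
/-!
Along a chain of covers a function `r : P → ZMod 2` that flips at every cover changes by the
number of steps, so `r = 1` at the bottom and `r = 0` at the top force an odd length.
Conversely, if all maximal chains are odd, any two saturated chains from a minimal element to
`x` have lengths of the same parity, since both extend by a common chain from `x` to a maximal
element; then `r x := 1 + (that length)` works.
-/

open scoped SetRel

abbrev CovBySeries (α : Type*) [Preorder α] := RelSeries {(a, b) : α × α | a ⋖ b}

theorem RelSeries.apply_last_eq_apply_head_add_length {α : Type*} {r : SetRel α α}
    {f : α → ZMod 2} (hf : ∀ a b, a ~[r] b → f a ≠ f b) (s : RelSeries r) :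
    f s.last = f s.head + s.length := by
  induction s using RelSeries.inductionOn' with
  | singleton x => simp
  | snoc p x hx ih =>
    have eq_add_one_of_ne : ∀ y z : ZMod 2, y ≠ z → z = y + 1 := by decide
    rw [RelSeries.last_snoc, RelSeries.head_snoc, RelSeries.snoc_length, Nat.cast_succ,
      eq_add_one_of_ne _ _ (hf _ _ hx), ih, add_assoc]

namespace CovBySeries

variable {α : Type*} [PartialOrder α]

theorem odd_length_of_parity {r : α → ZMod 2} (hmin : ∀ a, IsMin a → r a = 1)
    (hmax : ∀ b, IsMax b → r b = 0) (hcov : ∀ a b : α, a ⋖ b → r a ≠ r b)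
    (s : CovBySeries α) (hs : IsMin s.head) (ht : IsMax s.last) : Odd s.length := by
  have h := RelSeries.apply_last_eq_apply_head_add_length hcov s
  rw [hmin _ hs, hmax _ ht] at h
  rw [← ZMod.natCast_eq_one_iff_odd]
  grind

variable [WellFoundedLT α] [WellFoundedGT α]

theorem exists_isMin_head_last_eq (x : α) :
    ∃ s : CovBySeries α, IsMin s.head ∧ s.last = x := by
  induction x using WellFoundedLT.induction with
  | _ x ih =>
    by_cases hx : IsMin x
    · exact ⟨RelSeries.singleton _ x, hx, rfl⟩
    · obtain ⟨y, hyx⟩ := exists_covBy_of_wellFoundedGT hx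
      obtain ⟨s, hs, rfl⟩ := ih y hyx.lt
      exact ⟨s.snoc x hyx, by simpa using hs, by simp⟩

theorem exists_head_eq_isMax_last (x : α) :
    ∃ s : CovBySeries α, s.head = x ∧ IsMax s.last := by
  induction x using WellFoundedGT.induction with
  | _ x ih =>
    by_cases hx : IsMax x
    · exact ⟨RelSeries.singleton _ x, rfl, hx⟩
    · obtain ⟨y, hxy⟩ := exists_covBy_of_wellFoundedLT hx
      obtain ⟨s, rfl, hs⟩ := ih y hxy.lt
      exact ⟨s.cons x hxy, by simp, by simpa using hs⟩

theorem natCast_length_eq_of_forall_odd_length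
    (H : ∀ s : CovBySeries α, IsMin s.head → IsMax s.last → Odd s.length)
    {s t : CovBySeries α} (hs : IsMin s.head) (ht : IsMin t.head) (hst : s.last = t.last) :
    (s.length : ZMod 2) = t.length := by
  obtain ⟨u, hu, humax⟩ := exists_head_eq_isMax_last s.last
  have hsu := H (s.smash u hu.symm) (by simpa using hs) (by simpa using humax)
  have htu := H (t.smash u (hst ▸ hu.symm)) (by simpa using ht) (by simpa using humax)
  rw [← ZMod.natCast_eq_one_iff_odd, RelSeries.smash_length, Nat.cast_add] at hsu htu
  exact add_right_cancel (hsu.trans htu.symm)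

theorem exists_parity_of_forall_odd_length
    (H : ∀ s : CovBySeries α, IsMin s.head → IsMax s.last → Odd s.length) :
    ∃ r : α → ZMod 2, (∀ a, IsMin a → r a = 1) ∧ (∀ b, IsMax b → r b = 0) ∧
      ∀ a b : α, a ⋖ b → r a ≠ r b := by
  choose s hs hsx using exists_isMin_head_last_eq (α := α)
  refine ⟨fun x => 1 + (s x).length, fun a ha => ?_, fun b hb => ?_, fun a b hab => ?_⟩
  · have := natCast_length_eq_of_forall_odd_length H (hs a) (t := RelSeries.singleton _ a) ha
      (hsx a)
    simp [this]
  · have := H (s b) (hs b) ((hsx b).symm ▸ hb)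
    rw [← ZMod.natCast_eq_one_iff_odd] at this
    simp only [this]
    decide
  · have hab' : (s a).last ⋖ b := by rwa [hsx a]
    have := natCast_length_eq_of_forall_odd_length H (hs b) (t := (s a).snoc b hab')
      (by simpa using hs a) (by simp [hsx b])
    simp [this]

theorem forall_odd_length_iff_exists_parity :
    (∀ s : CovBySeries α, IsMin s.head → IsMax s.last → Odd s.length) ↔
      ∃ r : α → ZMod 2, (∀ a, IsMin a → r a = 1) ∧ (∀ b, IsMax b → r b = 0) ∧
        ∀ a b : α, a ⋖ b → r a ≠ r b :=
  ⟨exists_parity_of_forall_odd_length,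
    fun ⟨_, hmin, hmax, hcov⟩ => odd_length_of_parity hmin hmax hcov⟩

end CovBySeries

/-- All maximal chains of a finite poset `P` have an odd number of cover steps
iff there is `r : P → ℤ/2ℤ` with `r = 1` on minimal elements, `r = 0` on maximal elements,
and `r a ≠ r b` for every cover `a ⋖ b`. -/
theorem stmt13 (P : Type*) [Fintype P] [PartialOrder P] :
    (∀ (k : ℕ) (c : Fin (k + 1) → P), (∀ i : Fin k, c i.castSucc ⋖ c i.succ) →
      IsMin (c 0) → IsMax (c (Fin.last k)) → Odd k) ↔
    (∃ r : P → ZMod 2, (∀ a, IsMin a → r a = 1) ∧ (∀ b, IsMax b → r b = 0) ∧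
      ∀ a b : P, a ⋖ b → r a ≠ r b) := by
  rw [← CovBySeries.forall_odd_length_iff_exists_parity]
  exact ⟨fun H s => H s.length s s.step, fun H k c hc => H ⟨k, c, hc⟩⟩
end
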